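/- arXiv:1509.00204 — 2 statements merged into one kernel-verified Lean document; each statement's English description precedes it below -/
import Mathlib

section
/- For an odd natural number n and an n-matching π (a bijection {0,2,...,n-1} → {1,3,...,n}), the singular simplex σ_π : Δⁿ → M_π given by the canonical projection to the model space M_π = Δⁿ/∼_π is a cycle, i.e., ∂ₙσ_π = 0 in C_*(M_π; ℤ). -/
/-! In `M_π` the faces `j` and `π j` of `σ_π` are glued, so they are the same singular simplex;
since `π` sends even indices to odd ones they enter `∂σ_π` with opposite signs and cancel in pairs. -/

open Finsupp

noncomputable section

namespace SimplexCategory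

/-- The old Mathlib `SimplexCategory.toTopObj` (removed): the topological simplex as a set of
`ℝ≥0`-valued functions summing to `1`. -/
def toTopObj (x : SimplexCategory) : Set (Fin (x.len + 1) → NNReal) :=
  { f | ∑ i, f i = 1 }

/-- The old Mathlib `SimplexCategory.toTopMap` (removed). -/
def toTopMap {x y : SimplexCategory} (f : x ⟶ y) (g : x.toTopObj) : y.toTopObj :=
  ⟨fun i => ∑ j ∈ Finset.univ.filter (fun j => f.toOrderHom j = i), g.1 j, by
    show ∑ i, ∑ j ∈ Finset.univ.filter (fun j => f.toOrderHom j = i), g.1 j = 1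
    rw [Finset.sum_fiberwise]
    exact g.2⟩

theorem continuous_toTopMap {x y : SimplexCategory} (f : x ⟶ y) : Continuous (toTopMap f) := by
  refine Continuous.subtype_mk (continuous_pi fun i => ?_) _
  exact continuous_finset_sum _ (fun j _ => (continuous_apply _).comp continuous_subtype_val)

end SimplexCategory

/-- The topological standard `n`-simplex. -/
abbrev TopSimplex (n : ℕ) : Type :=
  (SimplexCategory.mk n).toTopObj

/-- Singular `n`-simplices on `X`. -/
abbrev SingularSimplex (n : ℕ) (X : Type*) [TopologicalSpace X] : Type _ :=
  C(TopSimplex n, X)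

/-- Singular `n`-chains on `X` with coefficients in `R`. -/
abbrev SC (R : Type*) [Ring R] (n : ℕ) (X : Type*) [TopologicalSpace X] : Type _ :=
  SingularSimplex n X →₀ R

/-- The inclusion of the `j`-th face of the standard `(n+1)`-simplex. -/
def faceIncl (n : ℕ) (j : Fin (n + 2)) : C(TopSimplex n, TopSimplex (n + 1)) :=
  ⟨SimplexCategory.toTopMap (SimplexCategory.δ j), SimplexCategory.continuous_toTopMap _⟩

/-- The `j`-th face of a singular `(n+1)`-simplex. -/
def sface {n : ℕ} {X : Type*} [TopologicalSpace X] (j : Fin (n + 2))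
    (σ : SingularSimplex (n + 1) X) : SingularSimplex n X :=
  σ.comp (faceIncl n j)

/-- The singular boundary operator. -/
def bdry (R : Type*) [Ring R] {n : ℕ} (X : Type*) [TopologicalSpace X] :
    SC R (n + 1) X →+ SC R n X :=
  Finsupp.liftAddHom fun σ =>
    ∑ j : Fin (n + 2), (Finsupp.singleAddHom (sface j σ)).comp
      (AddMonoidHom.mulLeft ((-1 : R) ^ (j : ℕ)))

/-- The subgroup of singular cycles. -/
def cycles (R : Type*) [Ring R] : (n : ℕ) → (X : Type*) → [TopologicalSpace X] →
    AddSubgroup (SC R n X)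
  | 0, _, _ => ⊤
  | (_ + 1), X, _ => (bdry R X).ker

/-- The subgroup of singular boundaries. -/
def bdries (R : Type*) [Ring R] (n : ℕ) (X : Type*) [TopologicalSpace X] :
    AddSubgroup (SC R n X) :=
  (bdry R (n := n) X).range

/-- Singular homology of `X` in degree `n` with coefficients in `R`. -/
abbrev SH (R : Type*) [Ring R] (n : ℕ) (X : Type*) [TopologicalSpace X] : Type _ :=
  cycles R n X ⧸ ((bdries R n X).addSubgroupOf (cycles R n X))

/-- The homology class of a cycle. -/
def hcls {R : Type*} [Ring R] {n : ℕ} {X : Type*} [TopologicalSpace X]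
    (c : SC R n X) (hc : c ∈ cycles R n X) : SH R n X :=
  QuotientAddGroup.mk ⟨c, hc⟩

lemma mem_cycles_of {R : Type*} [Ring R] {n : ℕ} {X : Type*} [TopologicalSpace X]
    {c : SC R (n + 1) X} (hc : bdry R X c = 0) : c ∈ cycles R (n + 1) X :=
  hc

/-- The chain map induced by a continuous map. -/
def cmap (R : Type*) [Ring R] {n : ℕ} {X Y : Type*} [TopologicalSpace X] [TopologicalSpace Y]
    (f : C(X, Y)) : SC R n X →+ SC R n Y :=
  Finsupp.liftAddHom fun σ => Finsupp.singleAddHom (f.comp σ)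

lemma sface_comp {n : ℕ} {X Y : Type*} [TopologicalSpace X] [TopologicalSpace Y]
    (f : C(X, Y)) (j : Fin (n + 2)) (σ : SingularSimplex (n + 1) X) :
    sface j (f.comp σ) = f.comp (sface j σ) := rfl

lemma cmap_bdry (R : Type*) [Ring R] {n : ℕ} {X Y : Type*} [TopologicalSpace X]
    [TopologicalSpace Y] (f : C(X, Y)) (c : SC R (n + 1) X) :
    bdry R Y (cmap R f c) = cmap R f (bdry R X c) := by
  have : (bdry R Y).comp (cmap R (n := n + 1) f) = (cmap R f).comp (bdry R X) := by
    refine Finsupp.addHom_ext fun σ a => ?_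
    simp only [AddMonoidHom.comp_apply, bdry, cmap, Finsupp.liftAddHom_apply_single,
      AddMonoidHom.finset_sum_apply, AddMonoidHom.coe_comp, Function.comp_apply,
      AddMonoidHom.coe_mulLeft, Finsupp.singleAddHom_apply, map_sum, sface_comp]
  exact DFunLike.congr_fun this c

lemma cmap_mem_cycles {R : Type*} [Ring R] {n : ℕ} {X Y : Type*} [TopologicalSpace X]
    [TopologicalSpace Y] (f : C(X, Y)) {c : SC R n X} (hc : c ∈ cycles R n X) :
    cmap R f c ∈ cycles R n Y := by
  cases n with
  | zero => trivial
  | succ n =>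
      have hc' : bdry R X c = 0 := hc
      show bdry R Y (cmap R f c) = 0
      rw [cmap_bdry, hc', map_zero]

/-- The map induced on homology by a continuous map. -/
def hmap (R : Type*) [Ring R] {n : ℕ} {X Y : Type*} [TopologicalSpace X] [TopologicalSpace Y]
    (f : C(X, Y)) : SH R n X →+ SH R n Y :=
  QuotientAddGroup.map _ _
    (AddMonoidHom.codRestrict ((cmap R f).comp (cycles R n X).subtype) (cycles R n Y)
      fun c => cmap_mem_cycles f c.2)
    (by
      rintro ⟨c, hc⟩ hmem
      have hb : c ∈ bdries R n X := hmem
      obtain ⟨b, hb⟩ := hb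
      show _ ∈ (bdries R n Y).addSubgroupOf _
      refine ⟨cmap R f b, ?_⟩
      simp only [AddMonoidHom.codRestrict_apply, AddMonoidHom.comp_apply,
        AddSubgroup.coe_subtype]
      rw [cmap_bdry, hb])

/-- The `ℓ¹`-norm of an integral chain. -/
def norm1 {n : ℕ} {X : Type*} [TopologicalSpace X] (c : SC ℤ n X) : ℕ :=
  c.sum fun _ a => a.natAbs

/-- The integral `ℓ¹`-seminorm of an integral homology class. -/
def clnorm {n : ℕ} {X : Type*} [TopologicalSpace X] (α : SH ℤ n X) : ℕ :=
  sInf { m | ∃ c : cycles ℤ n X, (QuotientAddGroup.mk c : SH ℤ n X) = α ∧ norm1 c.1 = m }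

/-- A fundamental class: a generator of the infinite cyclic top homology of an oriented
closed connected manifold. -/
structure FundClass (n : ℕ) (M : Type*) [TopologicalSpace M] where
  cls : SH ℤ n M
  spans : ∀ x : SH ℤ n M, ∃ k : ℤ, x = k • cls
  torsionfree : ∀ k : ℤ, k • cls = 0 → k = 0

/-- The integral simplicial volume. -/
def isv (n : ℕ) (M : Type*) [TopologicalSpace M] (φ : FundClass n M) : ℕ :=
  clnorm φ.cls

/-- A matching on the faces of the standard `(n+1)`-simplex: a bijection from the
even-indexed faces onto the odd-indexed faces. -/
def IsMatching (n : ℕ) (π : Fin (n + 2) → Fin (n + 2)) : Prop :=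
  Set.BijOn π { j | Even (j : ℕ) } { j | Odd (j : ℕ) }

/-- The gluing relation of the model space of a matching. -/
def matchRel (n : ℕ) (π : Fin (n + 2) → Fin (n + 2)) (x y : TopSimplex (n + 1)) : Prop :=
  ∃ j : Fin (n + 2), Even (j : ℕ) ∧ ∃ t : TopSimplex n,
    x = faceIncl n j t ∧ y = faceIncl n (π j) t

/-- The model space `M_π` of a matching `π`. -/
abbrev ModelSpace (n : ℕ) (π : Fin (n + 2) → Fin (n + 2)) : Type :=
  Quot (matchRel n π)

/-- The canonical projection `σ_π : Δ^{n+1} → M_π`, a singular simplex on `M_π`. -/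
def modelProj (n : ℕ) (π : Fin (n + 2) → Fin (n + 2)) :
    SingularSimplex (n + 1) (ModelSpace n π) :=
  ⟨Quot.mk _, continuous_quot_mk⟩

/-- The unreduced suspension of a space. -/
abbrev Susp (Y : Type*) [TopologicalSpace Y] : Type _ :=
  Quot (fun a b : Y × (Set.Icc (-1 : ℝ) 1) =>
    ((a.2 : ℝ) = 1 ∧ (b.2 : ℝ) = 1) ∨ ((a.2 : ℝ) = -1 ∧ (b.2 : ℝ) = -1))

end

lemma bdry_single (R : Type*) [Ring R] {n : ℕ} (X : Type*) [TopologicalSpace X]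
    (σ : SingularSimplex (n + 1) X) (r : R) :
    bdry R X (Finsupp.single σ r) =
      ∑ j : Fin (n + 2), Finsupp.single (sface j σ) ((-1) ^ (j : ℕ) * r) := by
  simp [bdry]

lemma Finset.sum_eq_sum_add_comp_of_bijOn {ι M : Type*} [Fintype ι] [AddCommMonoid M]
    {p : ι → Prop} [DecidablePred p] {π : ι → ι} (hπ : Set.BijOn π {i | p i} {i | ¬ p i})
    (f : ι → M) : ∑ i, f i = ∑ i with p i, (f i + f (π i)) := by
  rw [← Finset.sum_filter_add_sum_filter_not Finset.univ p, Finset.sum_add_distrib]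
  congr 1
  refine (Finset.sum_nbij π ?_ ?_ ?_ fun _ _ => rfl).symm
  · intro i hi
    simpa using hπ.mapsTo (by simpa using hi)
  · simpa using hπ.injOn
  · simpa using hπ.surjOn

lemma sface_modelProj_of_even {n : ℕ} {π : Fin (n + 2) → Fin (n + 2)} {j : Fin (n + 2)}
    (hj : Even (j : ℕ)) : sface (π j) (modelProj n π) = sface j (modelProj n π) := by
  ext t
  exact (Quot.sound ⟨j, hj, t, rfl, rfl⟩).symm

theorem stmt2_general (n : ℕ) (π : Fin (n + 2) → Fin (n + 2))
    (hπ : IsMatching n π) :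
    bdry ℤ (ModelSpace n π) (Finsupp.single (modelProj n π) 1) = 0 := by
  have hπ' : Set.BijOn π {j | Even (j : ℕ)} {j | ¬ Even (j : ℕ)} := by
    simp_rw [Nat.not_even_iff_odd]
    exact hπ
  rw [bdry_single, Finset.sum_eq_sum_add_comp_of_bijOn hπ']
  refine Finset.sum_eq_zero fun j hj => ?_
  have hj : Even (j : ℕ) := (Finset.mem_filter.mp hj).2
  rw [sface_modelProj_of_even hj, ← Finsupp.single_add, hj.neg_one_pow, (hπ.mapsTo hj).neg_one_pow]
  simp

theorem stmt2 (n : ℕ) (hn : Odd (n + 1)) (π : Fin (n + 2) → Fin (n + 2))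
    (hπ : IsMatching n π) :
    bdry ℤ (ModelSpace n π) (Finsupp.single (modelProj n π) 1) = 0 :=
  stmt2_general n π hπ
end

section
/- Let π be an n-matching for odd n, with model space M_π and model class α_π = [σ_π] ∈ H_n(M_π; ℤ). If X is a topological space and σ : Δⁿ → X is a singular simplex with ∂ₙσ = 0 in C_*(X; ℤ) such that σ ∘ i_j = σ ∘ i_{π(j)} for all even j ≤ n-1, then there exists a continuous map f : M_π → X with f ∘ σ_π = σ, and consequently H_n(f; ℤ)(α_π) = [σ]. -/
open Finsupp

lemma cmap_single (R : Type*) [Ring R] {n : ℕ} {X Y : Type*} [TopologicalSpace X]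
    [TopologicalSpace Y] (f : C(X, Y)) (σ : SingularSimplex n X) (r : R) :
    cmap R f (Finsupp.single σ r) = Finsupp.single (f.comp σ) r :=
  Finsupp.liftAddHom_apply_single _ _ _

lemma hmap_hcls (R : Type*) [Ring R] {n : ℕ} {X Y : Type*} [TopologicalSpace X]
    [TopologicalSpace Y] (f : C(X, Y)) (c : SC R n X) (hc : c ∈ cycles R n X) :
    hmap R f (hcls c hc) = hcls (cmap R f c) (cmap_mem_cycles f hc) :=
  rfl

lemma hcls_congr {R : Type*} [Ring R] {n : ℕ} {X : Type*} [TopologicalSpace X]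
    {c c' : SC R n X} (h : c = c') (hc : c ∈ cycles R n X) (hc' : c' ∈ cycles R n X) :
    hcls c hc = hcls c' hc' := by
  subst h
  rfl

def ContinuousMap.quotLift {Y X : Type*} [TopologicalSpace Y] [TopologicalSpace X]
    {r : Y → Y → Prop} (f : C(Y, X)) (hf : ∀ a b, r a b → f a = f b) : C(Quot r, X) :=
  ⟨Quot.lift f hf, continuous_quot_lift hf f.continuous⟩

lemma apply_eq_of_matchRel {n : ℕ} {π : Fin (n + 2) → Fin (n + 2)} {X : Type*}
    [TopologicalSpace X] {σ : SingularSimplex (n + 1) X}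
    (hmatch : ∀ j : Fin (n + 2), Even (j : ℕ) → sface j σ = sface (π j) σ) :
    ∀ a b, matchRel n π a b → σ a = σ b := by
  rintro _ _ ⟨j, hj, t, rfl, rfl⟩
  exact DFunLike.congr_fun (hmatch j hj) t

theorem stmt3_general (n : ℕ) (π : Fin (n + 2) → Fin (n + 2))
    (hπcyc : bdry ℤ (ModelSpace n π) (Finsupp.single (modelProj n π) 1) = 0)
    (X : Type*) [TopologicalSpace X] (σ : SingularSimplex (n + 1) X)
    (hσ : bdry ℤ X (Finsupp.single σ 1) = 0)
    (hmatch : ∀ j : Fin (n + 2), Even (j : ℕ) → sface j σ = sface (π j) σ) :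
    ∃ f : C(ModelSpace n π, X), f.comp (modelProj n π) = σ ∧
      hmap ℤ f (hcls (Finsupp.single (modelProj n π) 1) (mem_cycles_of hπcyc)) =
        hcls (Finsupp.single σ 1) (mem_cycles_of hσ) := by
  set f := σ.quotLift (apply_eq_of_matchRel hmatch)
  have hf : f.comp (modelProj n π) = σ := rfl
  refine ⟨f, hf, ?_⟩
  rw [hmap_hcls]
  exact hcls_congr (by rw [cmap_single, hf]) _ _

theorem stmt3 (n : ℕ) (hn : Odd (n + 1)) (π : Fin (n + 2) → Fin (n + 2))
    (hπ : IsMatching n π)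
    (hπcyc : bdry ℤ (ModelSpace n π) (Finsupp.single (modelProj n π) 1) = 0)
    (X : Type*) [TopologicalSpace X] (σ : SingularSimplex (n + 1) X)
    (hσ : bdry ℤ X (Finsupp.single σ 1) = 0)
    (hmatch : ∀ j : Fin (n + 2), Even (j : ℕ) → sface j σ = sface (π j) σ) :
    ∃ f : C(ModelSpace n π, X), f.comp (modelProj n π) = σ ∧
      hmap ℤ f (hcls (Finsupp.single (modelProj n π) 1) (mem_cycles_of hπcyc)) =
        hcls (Finsupp.single σ 1) (mem_cycles_of hσ) :=
  stmt3_general n π hπcyc X σ hσ hmatch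
end
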